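/- arXiv:1204.5463 — 2 statements merged into one kernel-verified Lean document; each statement's English description precedes it below -/
import Mathlib

section
/- Let A ∈ ℂ^{n×n}, let V_{m+1} ∈ ℂ^{n×(m+1)} have orthonormal columns v₁,…,v_{m+1}, let V_m consist of its first m columns, and let Ĥ_m ∈ ℂ^{(m+1)×m} satisfy A V_m = V_{m+1} Ĥ_m. Write Ĥ_m = [H_m; h_m^H] with H_m ∈ ℂ^{m×m} and h_m ∈ ℂ^m, assume H_m is invertible, and let f_m ∈ ℂ^m be the solution of H_m^H f_m = h_m. Then for λ ∈ ℂ and nonzero g ∈ ℂ^m, the pair (λ, V_m g) is a harmonic Ritz pair of A with respect to 𝒦 = range(V_m) if and only if (H_m + f_m h_m^H) g = λ g, i.e. (λ, g) is an eigenpair of the matrix H_m + f_m h_m^H. -/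
open Matrix

/-! With `W = V_m` and `B = A W = V_{m+1} Ĥ_m`, orthogonality to `A𝒦 = range B` is the normal
equation `Bᴴ (B g - λ W g) = 0`. Orthonormality of the columns of `V_{m+1}` turns `Bᴴ B` into
`Ĥ_mᴴ Ĥ_m = H_mᴴ H_m + h_m h_mᴴ` and `Bᴴ W` into `H_mᴴ`. Since `h_m = H_mᴴ f_m`, the normal
equation reads `H_mᴴ ((H_m + f_m h_mᴴ) g - λ g) = 0`, and `H_mᴴ` is invertible. -/

/-- A harmonic Ritz pair `(λ, v)` of `A` with respect to a subspace `𝒦`: `v ∈ 𝒦` is nonzero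
and `Av - λv` is orthogonal to `A𝒦` (standard Hermitian inner product). -/
def IsHarmonicRitzPair {n : ℕ} (A : Matrix (Fin n) (Fin n) ℂ)
    (K : Submodule ℂ (EuclideanSpace ℂ (Fin n))) (lam : ℂ)
    (v : EuclideanSpace ℂ (Fin n)) : Prop :=
  v ∈ K ∧ v ≠ 0 ∧
    Matrix.toEuclideanLin A v - lam • v ∈ (K.map (Matrix.toEuclideanLin A))ᗮ

namespace Matrix

section Euclidean

variable {𝕜 : Type*} [RCLike 𝕜] {ι κ : Type*} [Fintype ι] [Fintype κ] [DecidableEq ι]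
  [DecidableEq κ]

theorem mem_orthogonal_range_toEuclideanLin_iff (B : Matrix ι κ 𝕜) (x : EuclideanSpace 𝕜 ι) :
    x ∈ (LinearMap.range (toEuclideanLin B))ᗮ ↔ Bᴴ *ᵥ x.ofLp = 0 := by
  rw [LinearMap.orthogonal_range, LinearMap.mem_ker, ← toEuclideanLin_conjTranspose_eq_adjoint,
    toLpLin_apply, WithLp.toLp_eq_zero]

theorem map_range_toEuclideanLin (A : Matrix ι ι 𝕜) (W : Matrix ι κ 𝕜) :
    (LinearMap.range (toEuclideanLin W)).map (toEuclideanLin A) =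
      LinearMap.range (toEuclideanLin (A * W)) := by
  rw [← LinearMap.range_comp, toLpLin_mul_same]

end Euclidean

theorem mul_mulVec_eq_smul_mulVec_iff {R κ : Type*} [CommSemiring R] [Fintype κ] [DecidableEq κ]
    {M : Matrix κ κ R} (hM : IsUnit M) (N : Matrix κ κ R) (c : R) (x : κ → R) :
    (M * N) *ᵥ x = c • (M *ᵥ x) ↔ N *ᵥ x = c • x := by
  rw [← mulVec_mulVec, ← mulVec_smul]
  exact (mulVec_injective_of_isUnit hM).eq_iff

theorem conjTranspose_mul_self_fin_succ {R κ : Type*} [NonUnitalSemiring R] [StarRing R] {m : ℕ}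
    (M : Matrix (Fin (m + 1)) κ R) :
    Mᴴ * M = (M.submatrix Fin.castSucc id)ᴴ * M.submatrix Fin.castSucc id +
      vecMulVec (star (M (Fin.last m))) (M (Fin.last m)) := by
  ext i j
  simp [mul_apply, vecMulVec_apply, Fin.sum_univ_castSucc]

theorem mul_submatrix_id {R ι κ μ ν : Type*} [Mul R] [AddCommMonoid R] [Fintype κ]
    (M : Matrix ι κ R) (N : Matrix κ μ R) (e : ν → μ) :
    M * N.submatrix id e = (M * N).submatrix id e :=
  rfl

end Matrix

open Matrix

theorem isHarmonicRitzPair_toEuclideanLin_iff {n : ℕ} {κ : Type*} [Fintype κ] [DecidableEq κ]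
    (A : Matrix (Fin n) (Fin n) ℂ) {W : Matrix (Fin n) κ ℂ} (hW : Wᴴ * W = 1) (lam : ℂ)
    {g : EuclideanSpace ℂ κ} (hg : g ≠ 0) :
    IsHarmonicRitzPair A (LinearMap.range (toEuclideanLin W)) lam (toEuclideanLin W g) ↔
      ((A * W)ᴴ * (A * W)) *ᵥ g.ofLp = lam • (((A * W)ᴴ * W) *ᵥ g.ofLp) := by
  have hW_inj : Function.Injective (toEuclideanLin W) :=
    fun x y hxy ↦ WithLp.ofLp_injective _ <| by
      simpa [toLpLin_apply, mulVec_mulVec, hW] using congrArg (fun v ↦ Wᴴ *ᵥ v.ofLp) hxy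
  have hresidual : (toEuclideanLin A (toEuclideanLin W g) - lam • toEuclideanLin W g).ofLp =
      (A * W) *ᵥ g.ofLp - lam • (W *ᵥ g.ofLp) := by
    simp [toLpLin_apply, mulVec_mulVec]
  rw [IsHarmonicRitzPair, map_range_toEuclideanLin, mem_orthogonal_range_toEuclideanLin_iff,
    hresidual, mulVec_sub, mulVec_smul, mulVec_mulVec, mulVec_mulVec, sub_eq_zero]
  exact ⟨fun h ↦ h.2.2,
    fun h ↦ ⟨LinearMap.mem_range_self _ g, (map_ne_zero_iff _ hW_inj).mpr hg, h⟩⟩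

/-- With `A V_m = V_{m+1} Ĥ_m`, `Ĥ_m = [H_m; h_m^H]`, `H_m` invertible and
`H_m^H f_m = h_m`, the pair `(λ, V_m g)` (with `g ≠ 0`) is a harmonic Ritz pair of `A`
w.r.t. `𝒦 = range V_m` iff `(H_m + f_m h_m^H) g = λ g`. -/
theorem harmonic_ritz_pair_iff_eigenpair {n m : ℕ}
    (A : Matrix (Fin n) (Fin n) ℂ)
    (V : Matrix (Fin n) (Fin (m + 1)) ℂ)
    (hV : V.conjTranspose * V = 1)
    (Hhat : Matrix (Fin (m + 1)) (Fin m) ℂ)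
    (hArnoldi : A * V.submatrix id Fin.castSucc = V * Hhat)
    (Hm : Matrix (Fin m) (Fin m) ℂ)
    (hHm : ∀ (i : Fin m) (j : Fin m), Hhat (Fin.castSucc i) j = Hm i j)
    (hm : Fin m → ℂ)
    (hhm : ∀ j : Fin m, Hhat (Fin.last m) j = star (hm j))
    (hinv : IsUnit Hm)
    (f : Fin m → ℂ) (hf : Hm.conjTranspose *ᵥ f = hm)
    (lam : ℂ) (g : EuclideanSpace ℂ (Fin m)) (hg : g ≠ 0) :
    IsHarmonicRitzPair A
        (LinearMap.range (Matrix.toEuclideanLin (V.submatrix id Fin.castSucc)))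
        lam (Matrix.toEuclideanLin (V.submatrix id Fin.castSucc) g)
      ↔ (Hm + Matrix.vecMulVec f (fun j => star (hm j))) *ᵥ g = lam • (g : Fin m → ℂ) := by
  set W := V.submatrix id Fin.castSucc
  have hHhat_top : Hhat.submatrix Fin.castSucc id = Hm := Matrix.ext hHm
  have hHhat_last : Hhat (Fin.last m) = star hm := funext hhm
  have hWW : Wᴴ * W = 1 := by
    rw [conjTranspose_submatrix, ← submatrix_mul _ _ _ id _ Function.bijective_id, hV,
      submatrix_one _ (Fin.castSucc_injective m)]
  have hBW : (A * W)ᴴ * W = Hmᴴ := by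
    rw [hArnoldi, conjTranspose_mul, Matrix.mul_assoc, mul_submatrix_id, hV, mul_submatrix_id,
      Matrix.mul_one, ← hHhat_top, conjTranspose_submatrix]
  have hBB : (A * W)ᴴ * (A * W) = Hmᴴ * (Hm + vecMulVec f (star hm)) := by
    rw [hArnoldi, conjTranspose_mul, Matrix.mul_assoc, ← Matrix.mul_assoc Vᴴ, hV, Matrix.one_mul,
      conjTranspose_mul_self_fin_succ, hHhat_top, hHhat_last, star_star, Matrix.mul_add,
      mul_vecMulVec, hf]
  rw [isHarmonicRitzPair_toEuclideanLin_iff A hWW lam hg, hBB, hBW,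
    mul_mulVec_eq_smul_mulVec_iff ((isUnit_conjTranspose Hm).mpr hinv)]
  rfl
end

section
/- Let A ∈ ℂ^{n×n}, let 𝒦 ⊆ ℂⁿ be a subspace and s ∈ ℂⁿ a vector such that A𝒦 ⊆ 𝒦 + span{s}. Let r ∈ ℂⁿ be a vector spanning the orthogonal complement of A𝒦 inside 𝒦 + span{s}, i.e. r is orthogonal to A𝒦 and A𝒦 ⊕ span{r} = 𝒦 + span{s}. Then for every harmonic Ritz pair (λ, u) of A with respect to 𝒦, the residual Au − λu lies in span{r}. -/
/-! The residual `Au - λu` lies in `A𝒦 + 𝒦 ⊆ A𝒦 ⊕ span{r}` and is orthogonal to `A𝒦`. Since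
`span{r} ⊥ A𝒦`, the modular law gives `(A𝒦 ⊕ span{r}) ∩ (A𝒦)ᗮ = span{r}`. -/

open Matrix

theorem Submodule.sup_inf_orthogonal_eq_of_le_orthogonal {𝕜 E : Type*} [RCLike 𝕜]
    [NormedAddCommGroup E] [InnerProductSpace 𝕜 E] {U V : Submodule 𝕜 E} (hV : V ≤ Uᗮ) :
    (U ⊔ V) ⊓ Uᗮ = V := by
  rw [sup_comm, sup_inf_assoc_of_le U hV, U.inf_orthogonal_eq_bot, sup_bot_eq]

theorem Submodule.apply_sub_smul_mem_map_sup {R M : Type*} [CommRing R] [AddCommGroup M]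
    [Module R M] (f : M →ₗ[R] M) (K : Submodule R M) (c : R) {v : M} (hv : v ∈ K) :
    f v - c • v ∈ K.map f ⊔ K :=
  sub_mem (mem_sup_left (mem_map_of_mem hv)) (mem_sup_right (K.smul_mem c hv))

theorem harmonic_ritz_residual_mem_span_general {n : ℕ}
    (A : Matrix (Fin n) (Fin n) ℂ)
    (K : Submodule ℂ (EuclideanSpace ℂ (Fin n)))
    (s r : EuclideanSpace ℂ (Fin n))
    (h2 : r ∈ (K.map (Matrix.toEuclideanLin A))ᗮ)
    (h3 : K.map (Matrix.toEuclideanLin A) ⊔ (ℂ ∙ r) = K ⊔ (ℂ ∙ s))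
    (lam : ℂ) (u : EuclideanSpace ℂ (Fin n))
    (hu : IsHarmonicRitzPair A K lam u) :
    Matrix.toEuclideanLin A u - lam • u ∈ (ℂ ∙ r) := by
  obtain ⟨huK, -, hres_orth⟩ := hu
  set AK := K.map (Matrix.toEuclideanLin A)
  have hK : K ≤ AK ⊔ (ℂ ∙ r) := h3 ▸ le_sup_left
  have hres_sup : Matrix.toEuclideanLin A u - lam • u ∈ AK ⊔ (ℂ ∙ r) :=
    sup_le le_sup_left hK (Submodule.apply_sub_smul_mem_map_sup _ K lam huK)
  rw [← Submodule.sup_inf_orthogonal_eq_of_le_orthogonal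
    ((Submodule.span_singleton_le_iff_mem r _).mpr h2)]
  exact ⟨hres_sup, hres_orth⟩

/-- If `A𝒦 ⊆ 𝒦 + span{s}` and `r` spans the orthogonal complement of `A𝒦`
inside `𝒦 + span{s}` (i.e. `r ⊥ A𝒦` and `A𝒦 ⊕ span{r} = 𝒦 + span{s}`), then the residual
`Au - λu` of every harmonic Ritz pair `(λ, u)` of `A` w.r.t. `𝒦` lies in `span{r}`. -/
theorem harmonic_ritz_residual_mem_span {n : ℕ}
    (A : Matrix (Fin n) (Fin n) ℂ)
    (K : Submodule ℂ (EuclideanSpace ℂ (Fin n)))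
    (s r : EuclideanSpace ℂ (Fin n))
    (h1 : K.map (Matrix.toEuclideanLin A) ≤ K ⊔ (ℂ ∙ s))
    (h2 : r ∈ (K.map (Matrix.toEuclideanLin A))ᗮ)
    (h3 : K.map (Matrix.toEuclideanLin A) ⊔ (ℂ ∙ r) = K ⊔ (ℂ ∙ s))
    (lam : ℂ) (u : EuclideanSpace ℂ (Fin n))
    (hu : IsHarmonicRitzPair A K lam u) :
    Matrix.toEuclideanLin A u - lam • u ∈ (ℂ ∙ r) :=
  harmonic_ritz_residual_mem_span_general A K s r h2 h3 lam u hu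
end
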